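/- Let u : ℝ × ℝ → ℝ be twice continuously differentiable and satisfy the heat equation u_t = u_xx. Let a ∈ ℝ and restrict to the open set where 1 + 4at > 0. Then the function v(x,t) = (1 + 4at)^{-1/2}·exp(−a·x²/(1 + 4at))·u( x/(1 + 4at), t/(1 + 4at) ) also satisfies v_t = v_xx on that set. That is, the heat equation admits the one-parameter projective symmetry group generated by X₅ = 4t²∂/∂t + 4tx∂/∂x − (x² + 2t)u∂/∂u. -/

import Mathlib

/-!
Write `s = 1 + 4at` and `φ(x, t) = (x / s, t / s)`, so that `v = g · (u ∘ φ)` with the gauge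
`g = s^{-1/2} exp(-a x² / s)`. By the chain rule, `∂ₓ` and `∂ₜ` of any `g · (F ∘ φ)` are again of
this form, `g · (D F ∘ φ)`, for explicit first-order operators `Dₓ`, `Dₜ` whose coefficients are
polynomials in the new variables (because `1 / s = 1 - 4a · t / s`). The heat equation for `v`
therefore reduces to the identity `Dₓ (Dₓ u) = Dₜ u`, which after expansion is `u_t = u_xx`.
-/

open Real Topology

section PartialDerivatives

variable {𝕜 E : Type*} [NontriviallyNormedField 𝕜] [NormedAddCommGroup E] [NormedSpace 𝕜 E]

theorem ContinuousLinearMap.apply_pair (L : 𝕜 × 𝕜 →L[𝕜] E) (d₁ d₂ : 𝕜) :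
    L (d₁, d₂) = d₁ • L (1, 0) + d₂ • L (0, 1) := by
  rw [← map_smul, ← map_smul, ← map_add]
  simp

theorem DifferentiableAt.hasDerivAt_section_fst {f : 𝕜 × 𝕜 → E} {p : 𝕜 × 𝕜}
    (hf : DifferentiableAt 𝕜 f p) :
    HasDerivAt (fun y => f (y, p.2)) (fderiv 𝕜 f p (1, 0)) p.1 :=
  hf.hasFDerivAt.comp_hasDerivAt p.1 ((hasDerivAt_id p.1).prodMk (hasDerivAt_const p.1 p.2))

theorem DifferentiableAt.hasDerivAt_section_snd {f : 𝕜 × 𝕜 → E} {p : 𝕜 × 𝕜}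
    (hf : DifferentiableAt 𝕜 f p) :
    HasDerivAt (fun τ => f (p.1, τ)) (fderiv 𝕜 f p (0, 1)) p.2 :=
  hf.hasFDerivAt.comp_hasDerivAt p.2 ((hasDerivAt_const p.2 p.1).prodMk (hasDerivAt_id p.2))

theorem fderiv_apply_one_zero_eq {f : 𝕜 × 𝕜 → E} {p : 𝕜 × 𝕜} {d : E}
    (hf : DifferentiableAt 𝕜 f p) (hd : HasDerivAt (fun y => f (y, p.2)) d p.1) :
    fderiv 𝕜 f p (1, 0) = d :=
  hf.hasDerivAt_section_fst.unique hd

theorem fderiv_apply_zero_one_eq {f : 𝕜 × 𝕜 → E} {p : 𝕜 × 𝕜} {d : E}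
    (hf : DifferentiableAt 𝕜 f p) (hd : HasDerivAt (fun τ => f (p.1, τ)) d p.2) :
    fderiv 𝕜 f p (0, 1) = d :=
  hf.hasDerivAt_section_snd.unique hd

end PartialDerivatives

noncomputable def heatGauge (a x t : ℝ) : ℝ :=
  (1 + 4 * a * t) ^ (-(1 / 2) : ℝ) * exp (-(a * x ^ 2) / (1 + 4 * a * t))

noncomputable def projectivePoint (a x t : ℝ) : ℝ × ℝ :=
  (x / (1 + 4 * a * t), t / (1 + 4 * a * t))

noncomputable def projectiveTransform (a : ℝ) (F : ℝ × ℝ → ℝ) (p : ℝ × ℝ) : ℝ :=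
  heatGauge a p.1 p.2 * F (projectivePoint a p.1 p.2)

section Gauge

variable {a x t : ℝ}

theorem hasDerivAt_heatGauge_fst (a x t : ℝ) :
    HasDerivAt (fun y => heatGauge a y t) (-(2 * a * x) / (1 + 4 * a * t) * heatGauge a x t) x := by
  have h := (((hasDerivAt_pow 2 x).const_mul a).neg.div_const (1 + 4 * a * t)).exp.const_mul
    ((1 + 4 * a * t) ^ (-(1 / 2) : ℝ))
  refine h.congr_deriv ?_
  simp only [heatGauge, Pi.neg_apply]
  ring

theorem hasDerivAt_heatGauge_snd (hs : 1 + 4 * a * t ≠ 0) :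
    HasDerivAt (fun τ => heatGauge a x τ)
      ((4 * a ^ 2 * x ^ 2 / (1 + 4 * a * t) ^ 2 - 2 * a / (1 + 4 * a * t)) * heatGauge a x t) t := by
  have hden : HasDerivAt (fun τ : ℝ => 1 + 4 * a * τ) (4 * a) t := by
    simpa using ((hasDerivAt_id t).const_mul (4 * a)).const_add 1
  have h := (hden.rpow_const (p := -(1 / 2)) (Or.inl hs)).mul
    ((hasDerivAt_const t (-(a * x ^ 2))).div hden hs).exp
  refine h.congr_deriv ?_
  rw [rpow_sub_one hs]
  simp only [heatGauge, Pi.div_apply]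
  field_simp
  ring

theorem hasDerivAt_projectivePoint_fst (a x t : ℝ) :
    HasDerivAt (fun y => projectivePoint a y t) ((1 + 4 * a * t)⁻¹, 0) x := by
  refine ((hasDerivAt_id x).div_const (1 + 4 * a * t)).prodMk
    (hasDerivAt_const x (t / (1 + 4 * a * t))) |>.congr_deriv ?_
  rw [one_div]

theorem hasDerivAt_projectivePoint_snd (hs : 1 + 4 * a * t ≠ 0) :
    HasDerivAt (fun τ => projectivePoint a x τ)
      (-(4 * a * x) / (1 + 4 * a * t) ^ 2, ((1 + 4 * a * t) ^ 2)⁻¹) t := by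
  have hden : HasDerivAt (fun τ : ℝ => 1 + 4 * a * τ) (4 * a) t := by
    simpa using ((hasDerivAt_id t).const_mul (4 * a)).const_add 1
  refine ((hasDerivAt_const t x).div hden hs).prodMk ((hasDerivAt_id t).div hden hs) |>.congr_deriv ?_
  simp only [Prod.mk.injEq]
  constructor
  · ring
  · simp only [id]
    field_simp
    ring

end Gauge

/- `∂ₓ` and `∂ₜ` of `projectiveTransform a F` are `projectiveTransform a` of these; the coefficient
`1 - 4 a q.2` is `1 / (1 + 4at)` written in the transformed variables `q = projectivePoint a x t`. -/
noncomputable def projectiveDx (a : ℝ) (F : ℝ × ℝ → ℝ) (q : ℝ × ℝ) : ℝ :=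
  -2 * a * q.1 * F q + (1 - 4 * a * q.2) * fderiv ℝ F q (1, 0)

noncomputable def projectiveDt (a : ℝ) (F : ℝ × ℝ → ℝ) (q : ℝ × ℝ) : ℝ :=
  (4 * a ^ 2 * q.1 ^ 2 - 2 * a * (1 - 4 * a * q.2)) * F q
    - 4 * a * q.1 * (1 - 4 * a * q.2) * fderiv ℝ F q (1, 0)
    + (1 - 4 * a * q.2) ^ 2 * fderiv ℝ F q (0, 1)

section Transform

variable {a x t : ℝ} {F : ℝ × ℝ → ℝ}

theorem one_sub_four_mul_projectivePoint_snd (hs : 1 + 4 * a * t ≠ 0) :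
    1 - 4 * a * (projectivePoint a x t).2 = (1 + 4 * a * t)⁻¹ := by
  simp only [projectivePoint]
  field_simp
  ring

theorem differentiableAt_projectiveTransform (hF : DifferentiableAt ℝ F (projectivePoint a x t))
    (hs : 1 + 4 * a * t ≠ 0) : DifferentiableAt ℝ (projectiveTransform a F) (x, t) := by
  have hφ : DifferentiableAt ℝ (fun p : ℝ × ℝ => projectivePoint a p.1 p.2) (x, t) := by
    unfold projectivePoint
    fun_prop (disch := exact hs)
  have hg : DifferentiableAt ℝ (fun p : ℝ × ℝ => heatGauge a p.1 p.2) (x, t) := by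
    unfold heatGauge
    fun_prop (disch := exact hs)
  exact hg.mul (hF.comp (x, t) hφ)

theorem hasDerivAt_projectiveTransform_fst (hF : DifferentiableAt ℝ F (projectivePoint a x t))
    (hs : 1 + 4 * a * t ≠ 0) :
    HasDerivAt (fun y => projectiveTransform a F (y, t))
      (projectiveTransform a (projectiveDx a F) (x, t)) x := by
  have h := (hasDerivAt_heatGauge_fst a x t).mul
    (hF.hasFDerivAt.comp_hasDerivAt x (hasDerivAt_projectivePoint_fst a x t))
  refine h.congr_deriv ?_
  rw [ContinuousLinearMap.apply_pair]
  simp only [projectiveTransform, projectiveDx, smul_eq_mul, Function.comp_apply]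
  rw [one_sub_four_mul_projectivePoint_snd hs]
  simp only [projectivePoint]
  field_simp
  ring

theorem hasDerivAt_projectiveTransform_snd (hF : DifferentiableAt ℝ F (projectivePoint a x t))
    (hs : 1 + 4 * a * t ≠ 0) :
    HasDerivAt (fun τ => projectiveTransform a F (x, τ))
      (projectiveTransform a (projectiveDt a F) (x, t)) t := by
  have h := (hasDerivAt_heatGauge_snd (x := x) hs).mul
    (hF.hasFDerivAt.comp_hasDerivAt t (hasDerivAt_projectivePoint_snd hs))
  refine h.congr_deriv ?_
  rw [ContinuousLinearMap.apply_pair]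
  simp only [projectiveTransform, projectiveDt, smul_eq_mul, Function.comp_apply]
  rw [one_sub_four_mul_projectivePoint_snd hs]
  simp only [projectivePoint]
  field_simp
  ring

theorem fderiv_projectiveTransform_one_zero (hF : DifferentiableAt ℝ F (projectivePoint a x t))
    (hs : 1 + 4 * a * t ≠ 0) :
    fderiv ℝ (projectiveTransform a F) (x, t) (1, 0)
      = projectiveTransform a (projectiveDx a F) (x, t) :=
  fderiv_apply_one_zero_eq (differentiableAt_projectiveTransform hF hs)
    (hasDerivAt_projectiveTransform_fst hF hs)

theorem fderiv_projectiveTransform_zero_one (hF : DifferentiableAt ℝ F (projectivePoint a x t))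
    (hs : 1 + 4 * a * t ≠ 0) :
    fderiv ℝ (projectiveTransform a F) (x, t) (0, 1)
      = projectiveTransform a (projectiveDt a F) (x, t) :=
  fderiv_apply_zero_one_eq (differentiableAt_projectiveTransform hF hs)
    (hasDerivAt_projectiveTransform_snd hF hs)

end Transform

section Operators

variable {U : ℝ × ℝ → ℝ} {q : ℝ × ℝ}

theorem differentiableAt_projectiveDx (hU : DifferentiableAt ℝ U q)
    (hUx : DifferentiableAt ℝ (fun p => fderiv ℝ U p (1, 0)) q) (a : ℝ) :
    DifferentiableAt ℝ (projectiveDx a U) q := by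
  unfold projectiveDx
  fun_prop

theorem projectiveDx_projectiveDx (hU : DifferentiableAt ℝ U q)
    (hUx : DifferentiableAt ℝ (fun p => fderiv ℝ U p (1, 0)) q) (a : ℝ)
    (hheat : fderiv ℝ U q (0, 1) = fderiv ℝ (fun p => fderiv ℝ U p (1, 0)) q (1, 0)) :
    projectiveDx a (projectiveDx a U) q = projectiveDt a U q := by
  have hDxx : fderiv ℝ (projectiveDx a U) q (1, 0)
      = -2 * a * U q - 2 * a * q.1 * fderiv ℝ U q (1, 0)
        + (1 - 4 * a * q.2) * fderiv ℝ (fun p => fderiv ℝ U p (1, 0)) q (1, 0) := by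
    refine fderiv_apply_one_zero_eq (differentiableAt_projectiveDx hU hUx a) ?_
    have h := (((hasDerivAt_id q.1).const_mul (-2 * a)).mul hU.hasDerivAt_section_fst).add
      (hUx.hasDerivAt_section_fst.const_mul (1 - 4 * a * q.2))
    refine h.congr_deriv ?_
    simp only [id]
    ring
  rw [projectiveDx, hDxx, projectiveDt, hheat]
  simp only [projectiveDx]
  ring

end Operators

theorem heat_equation_projective_symmetry
    (u : ℝ → ℝ → ℝ) (hu : ContDiff ℝ 2 (fun p : ℝ × ℝ => u p.1 p.2))
    (hheat : ∀ x t : ℝ,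
      fderiv ℝ (fun p : ℝ × ℝ => u p.1 p.2) (x, t) (0, 1)
        = fderiv ℝ (fun p : ℝ × ℝ =>
            fderiv ℝ (fun q : ℝ × ℝ => u q.1 q.2) p (1, 0)) (x, t) (1, 0))
    (a : ℝ)
    (v : ℝ → ℝ → ℝ)
    (hv : ∀ x t, v x t = (1 + 4 * a * t) ^ (-(1 / 2) : ℝ)
        * Real.exp (-(a * x ^ 2) / (1 + 4 * a * t))
        * u (x / (1 + 4 * a * t)) (t / (1 + 4 * a * t))) :
    ∀ x t : ℝ, 0 < 1 + 4 * a * t →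
      fderiv ℝ (fun p : ℝ × ℝ => v p.1 p.2) (x, t) (0, 1)
        = fderiv ℝ (fun p : ℝ × ℝ =>
            fderiv ℝ (fun q : ℝ × ℝ => v q.1 q.2) p (1, 0)) (x, t) (1, 0) := by
  intro x t ht
  set U : ℝ × ℝ → ℝ := fun p => u p.1 p.2
  have hU : Differentiable ℝ U := hu.differentiable (by norm_num)
  have hUx : Differentiable ℝ (fun q => fderiv ℝ U q (1, 0)) :=
    ((hu.fderiv_right (m := 1) (by norm_num)).differentiable one_ne_zero).clm_apply
      (differentiable_const _)
  have hvU : (fun p : ℝ × ℝ => v p.1 p.2) = projectiveTransform a U :=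
    funext fun p => hv p.1 p.2
  have hvx : (fun p => fderiv ℝ (projectiveTransform a U) p (1, 0))
      =ᶠ[𝓝 (x, t)] projectiveTransform a (projectiveDx a U) := by
    have hopen : IsOpen {p : ℝ × ℝ | 0 < 1 + 4 * a * p.2} :=
      isOpen_lt continuous_const (by fun_prop)
    filter_upwards [hopen.mem_nhds ht] with p hp
    exact fderiv_projectiveTransform_one_zero (hU _) hp.ne'
  rw [hvU, fderiv_projectiveTransform_zero_one (hU _) ht.ne', hvx.fderiv_eq,
    fderiv_projectiveTransform_one_zero (differentiableAt_projectiveDx (hU _) (hUx _) a) ht.ne',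
    projectiveTransform, projectiveTransform,
    projectiveDx_projectiveDx (q := projectivePoint a x t) (hU _) (hUx _) a (hheat _ _)]
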